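/- arXiv:0811.0672 — 8 statements merged into one kernel-verified Lean document; each statement's English description precedes it below -/
import Mathlib

section
/- Let X_1, …, X_{N_1} and Y_1, …, Y_{N_2} be vectors in ℝ^d with sample means X̄ = (1/N_1) Σ X_i, Ȳ = (1/N_2) Σ Y_i and sample covariance matrices S_1 = (1/N_1) Σ (X_i − X̄)(X_i − X̄)ᵀ, S_2 = (1/N_2) Σ (Y_i − Ȳ)(Y_i − Ȳ)ᵀ, and assume S_1 and S_2 are positive definite. For μ ∈ ℝ^d and positive definite d×d matrices Σ_1, Σ_2 define l(μ, Σ_1, Σ_2) = −(1/2) Σ_{i=1}^{N_1} (X_i − μ)ᵀ Σ_1⁻¹ (X_i − μ) − (N_1/2) log det Σ_1 − (1/2) Σ_{i=1}^{N_2} (Y_i − μ)ᵀ Σ_2⁻¹ (Y_i − μ) − (N_2/2) log det Σ_2. Then for every fixed μ, the supremum of l(μ, Σ_1, Σ_2) over positive definite Σ_1, Σ_2 equals −(N_1 + N_2)d/2 − (N_1/2) log det S_1 − (N_2/2) log det S_2 − (N_1/2) log(1 + (X̄ − μ)ᵀ S_1⁻¹ (X̄ − μ)) − (N_2/2) log(1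 + (Ȳ − μ)ᵀ S_2⁻¹ (Ȳ − μ)). Hence maximizing l over (μ, Σ_1, Σ_2) is equivalent to minimizing (1 + (X̄ − μ)ᵀ S_1⁻¹ (X̄ − μ))^{N_1/2} (1 + (Ȳ − μ)ᵀ S_2⁻¹ (Ȳ − μ))^{N_2/2} over μ. -/
/-!
For fixed `μ` and a sample with mean `X̄` and covariance `S`, the scatter identity
`∑ (Xᵢ - μ)(Xᵢ - μ)ᵀ = N (S + (X̄ - μ)(X̄ - μ)ᵀ)` turns the contribution of `Σ` to the
log-likelihood into `-(N/2) (tr (Σ⁻¹ A) + log det Σ)` with `A = S + (X̄ - μ)(X̄ - μ)ᵀ`.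
Applying `log λ ≤ λ - 1` to the eigenvalues of a positive definite matrix similar to `Σ⁻¹ A` gives
`tr (Σ⁻¹ A) + log det Σ ≥ d + log det A`, with equality at `Σ = A`; the matrix determinant
lemma `det A = det S (1 + (X̄ - μ)ᵀ S⁻¹ (X̄ - μ))` then yields the profile likelihood. The two
samples decouple, and the profile is a constant minus the logarithm of the product, so
maximizing one is minimizing the other.
-/

open Matrix Finset Real

namespace Matrix

theorem sum_vecMulVec {ι m n R : Type*} [NonUnitalNonAssocSemiring R] (s : Finset ι)
    (f : ι → m → R) (v : n → R) : ∑ i ∈ s, vecMulVec (f i) v = vecMulVec (∑ i ∈ s, f i) v := by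
  ext; simp [vecMulVec_apply, Matrix.sum_apply, Finset.sum_mul]

theorem vecMulVec_sum {ι m n R : Type*} [NonUnitalNonAssocSemiring R] (s : Finset ι)
    (w : m → R) (f : ι → n → R) : ∑ i ∈ s, vecMulVec w (f i) = vecMulVec w (∑ i ∈ s, f i) := by
  ext; simp [vecMulVec_apply, Matrix.sum_apply, Finset.mul_sum]

variable {n : Type*} [Fintype n]

theorem dotProduct_mulVec_eq_trace_mul_vecMulVec {R : Type*} [CommSemiring R]
    (M : Matrix n n R) (v : n → R) : v ⬝ᵥ (M *ᵥ v) = (M * vecMulVec v v).trace := by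
  rw [mul_vecMulVec, trace_vecMulVec, dotProduct_comm]

theorem PosDef.add_vecMulVec_self {S : Matrix n n ℝ} (hS : S.PosDef) (v : n → ℝ) :
    (S + vecMulVec v v).PosDef := by
  simpa using hS.add_posSemidef (posSemidef_vecMulVec_self_star v)

variable [DecidableEq n]

theorem det_add_vecMulVec {R : Type*} [CommRing R] {S : Matrix n n R} (hS : IsUnit S.det)
    (u v : n → R) : (S + vecMulVec u v).det = S.det * (1 + v ⬝ᵥ (S⁻¹ *ᵥ u)) := by
  rw [vecMulVec_eq Unit, det_add_replicateCol_mul_replicateRow hS, Matrix.mul_assoc,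
    ← replicateCol_mulVec, det_unique (n := Unit), add_apply, one_apply_eq,
    replicateRow_mul_replicateCol_apply]

namespace PosDef

theorem one_add_dotProduct_inv_mulVec_pos {S : Matrix n n ℝ} (hS : S.PosDef) (v : n → ℝ) :
    0 < 1 + v ⬝ᵥ (S⁻¹ *ᵥ v) := by
  have := hS.inv.posSemidef.dotProduct_mulVec_nonneg v
  rw [star_trivial] at this
  linarith

theorem card_add_log_det_le_trace {P : Matrix n n ℝ} (hP : P.PosDef) :
    Fintype.card n + log P.det ≤ P.trace := by
  have hpos := hP.eigenvalues_pos
  rw [hP.1.trace_eq_sum_eigenvalues, hP.1.det_eq_prod_eigenvalues]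
  simp only [RCLike.ofReal_real_eq_id, id]
  rw [log_prod fun i _ => (hpos i).ne', Fintype.card_eq_sum_ones, Nat.cast_sum, ← sum_add_distrib]
  refine sum_le_sum fun i _ => ?_
  linarith [log_le_sub_one_of_pos (hpos i), Nat.cast_one (R := ℝ)]

open scoped MatrixOrder in
/-- Writing `A = Bᴴ * B`, the matrix `B * S⁻¹ * Bᴴ` has the trace of `S⁻¹ * A` and the
determinant `det A / det S`, so this is `card_add_log_det_le_trace` for it. -/
theorem card_add_log_det_le_trace_inv_mul_add_log_det {A S : Matrix n n ℝ} (hA : A.PosDef)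
    (hS : S.PosDef) : Fintype.card n + log A.det ≤ (S⁻¹ * A).trace + log S.det := by
  obtain ⟨B, rfl⟩ := CStarAlgebra.nonneg_iff_eq_star_mul_self.mp hA.posSemidef.nonneg
  have hB : IsUnit B :=
    (isUnit_iff_isUnit_det B).mpr (right_ne_zero_of_mul (det_mul _ B ▸ hA.det_pos.ne')).isUnit
  have hQ : (B * S⁻¹ * star B).PosDef :=
    hS.inv.mul_mul_conjTranspose_same (vecMul_injective_iff_isUnit.mpr hB)
  have hdet : (B * S⁻¹ * star B).det = (star B * B).det / S.det := by
    rw [det_mul, det_mul, det_mul, det_nonsing_inv, Ring.inverse_eq_inv']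
    ring
  have key := hQ.card_add_log_det_le_trace
  rw [trace_mul_cycle, trace_mul_comm, hdet, log_div hA.det_pos.ne' hS.det_pos.ne'] at key
  linarith

end PosDef

end Matrix

section SampleStatistics

variable {ι n : Type*} [Fintype ι]

theorem card_smul_inv_smul_sum {M : Type*} [AddCommGroup M] [Module ℝ M] (f : ι → M) :
    (Fintype.card ι : ℝ) • ((Fintype.card ι : ℝ)⁻¹ • ∑ i, f i) = ∑ i, f i := by
  cases isEmpty_or_nonempty ι
  · simp
  · exact smul_inv_smul₀ (Nat.cast_ne_zero.mpr Fintype.card_ne_zero) _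

noncomputable def sampleMean (X : ι → n → ℝ) : n → ℝ := (Fintype.card ι : ℝ)⁻¹ • ∑ i, X i

noncomputable def sampleCov (X : ι → n → ℝ) : Matrix n n ℝ :=
  (Fintype.card ι : ℝ)⁻¹ • ∑ i, vecMulVec (X i - sampleMean X) (X i - sampleMean X)

theorem sum_sub_sampleMean (X : ι → n → ℝ) : ∑ i, (X i - sampleMean X) = 0 := by
  rw [sum_sub_distrib, sum_const, card_univ, ← Nat.cast_smul_eq_nsmul ℝ, sampleMean,
    card_smul_inv_smul_sum, sub_self]

theorem sum_vecMulVec_sub (X : ι → n → ℝ) (μ : n → ℝ) :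
    ∑ i, vecMulVec (X i - μ) (X i - μ) = (Fintype.card ι : ℝ) •
      (sampleCov X + vecMulVec (sampleMean X - μ) (sampleMean X - μ)) := by
  have h : ∀ i, X i - μ = (X i - sampleMean X) + (sampleMean X - μ) := fun i => by abel
  simp_rw [h, add_vecMulVec, vecMulVec_add, sum_add_distrib]
  rw [sum_vecMulVec, vecMulVec_sum, sum_sub_sampleMean, zero_vecMulVec, vecMulVec_zero, sum_const,
    card_univ, ← Nat.cast_smul_eq_nsmul ℝ, smul_add, sampleCov, card_smul_inv_smul_sum]
  abel

theorem sum_dotProduct_mulVec_sub [Fintype n] (X : ι → n → ℝ) (μ : n → ℝ) (M : Matrix n n ℝ) :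
    ∑ i, (X i - μ) ⬝ᵥ (M *ᵥ (X i - μ)) = Fintype.card ι *
      (M * (sampleCov X + vecMulVec (sampleMean X - μ) (sampleMean X - μ))).trace := by
  simp_rw [dotProduct_mulVec_eq_trace_mul_vecMulVec, ← trace_sum, ← Matrix.mul_sum,
    sum_vecMulVec_sub, Matrix.mul_smul, trace_smul, smul_eq_mul]

end SampleStatistics

section Optimization

theorem csSup_setOf_add_eq_of_isGreatest {α β : Type*} {f : α → ℝ} {g : β → ℝ} {s : Set α}
    {t : Set β} {a b : ℝ} (ha : IsGreatest (f '' s) a) (hb : IsGreatest (g '' t) b) :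
    sSup {x | ∃ u v, u ∈ s ∧ v ∈ t ∧ x = f u + g v} = a + b := by
  have hset : {x | ∃ u v, u ∈ s ∧ v ∈ t ∧ x = f u + g v} =
      Set.image2 (· + ·) (f '' s) (g '' t) := by
    ext x
    simp only [Set.image2_image_left, Set.image2_image_right, Set.mem_image2, Set.mem_ofPred_eq]
    exact ⟨fun ⟨u, v, hu, hv, hx⟩ => ⟨u, hu, v, hv, hx.symm⟩,
      fun ⟨u, hu, v, hv, hx⟩ => ⟨u, v, hu, hv, hx.symm⟩⟩
  rw [hset]
  exact (ha.image2 (fun _ => add_left_mono) (fun _ => add_right_mono) hb).csSup_eq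

theorem forall_le_iff_forall_le_of_eq_const_sub_log {α : Type*} {f g : α → ℝ} (c : ℝ)
    (hg : ∀ x, 0 < g x) (hf : ∀ x, f x = c - log (g x)) (a : α) :
    (∀ x, f x ≤ f a) ↔ ∀ x, g a ≤ g x := by
  simp only [hf, sub_le_sub_iff_left, log_le_log_iff (hg _) (hg _)]

end Optimization

section GaussianLikelihood

variable {ι n : Type*} [Fintype ι] [Fintype n] [DecidableEq n]

noncomputable def gaussianLogLik (X : ι → n → ℝ) (μ : n → ℝ) (C : Matrix n n ℝ) : ℝ :=
  -(1/2) * ∑ i, (X i - μ) ⬝ᵥ (C⁻¹ *ᵥ (X i - μ)) - (Fintype.card ι / 2 : ℝ) * log C.det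

theorem gaussianLogLik_eq_trace (X : ι → n → ℝ) (μ : n → ℝ) (C : Matrix n n ℝ) :
    gaussianLogLik X μ C = -(Fintype.card ι / 2 : ℝ) *
      ((C⁻¹ * (sampleCov X + vecMulVec (sampleMean X - μ) (sampleMean X - μ))).trace
        + log C.det) := by
  rw [gaussianLogLik, sum_dotProduct_mulVec_sub]
  ring

theorem isGreatest_gaussianLogLik {X : ι → n → ℝ} (hS : (sampleCov X).PosDef) (μ : n → ℝ) :
    IsGreatest (gaussianLogLik X μ '' {C | C.PosDef})
      (-(Fintype.card ι / 2 : ℝ) * (Fintype.card n + log (sampleCov X).det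
        + log (1 + (sampleMean X - μ) ⬝ᵥ ((sampleCov X)⁻¹ *ᵥ (sampleMean X - μ))))) := by
  set v := sampleMean X - μ
  have hA := hS.add_vecMulVec_self v
  have hlog : log (sampleCov X + vecMulVec v v).det
      = log (sampleCov X).det + log (1 + v ⬝ᵥ ((sampleCov X)⁻¹ *ᵥ v)) := by
    rw [det_add_vecMulVec hS.det_pos.ne'.isUnit,
      log_mul hS.det_pos.ne' (hS.one_add_dotProduct_inv_mulVec_pos v).ne']
  refine ⟨⟨_, hA, ?_⟩, ?_⟩
  · rw [gaussianLogLik_eq_trace, nonsing_inv_mul _ hA.det_pos.ne'.isUnit, trace_one, hlog]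
    ring
  · rintro _ ⟨C, hC, rfl⟩
    rw [gaussianLogLik_eq_trace, add_assoc, ← hlog]
    exact mul_le_mul_of_nonpos_left (hA.card_add_log_det_le_trace_inv_mul_add_log_det hC)
      (neg_nonpos.mpr (by positivity))

end GaussianLikelihood

theorem stmt2_general (d N₁ N₂ : ℕ)
    (X : Fin N₁ → Fin d → ℝ) (Y : Fin N₂ → Fin d → ℝ) :
    let Xbar : Fin d → ℝ := (N₁ : ℝ)⁻¹ • ∑ i, X i
    let Ybar : Fin d → ℝ := (N₂ : ℝ)⁻¹ • ∑ i, Y i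
    let S₁ : Matrix (Fin d) (Fin d) ℝ :=
      (N₁ : ℝ)⁻¹ • ∑ i, vecMulVec (X i - Xbar) (X i - Xbar)
    let S₂ : Matrix (Fin d) (Fin d) ℝ :=
      (N₂ : ℝ)⁻¹ • ∑ i, vecMulVec (Y i - Ybar) (Y i - Ybar)
    let l : (Fin d → ℝ) → Matrix (Fin d) (Fin d) ℝ → Matrix (Fin d) (Fin d) ℝ → ℝ :=
      fun μ Sg₁ Sg₂ =>
        -(1/2) * ∑ i, (X i - μ) ⬝ᵥ (Sg₁⁻¹ *ᵥ (X i - μ)) - (N₁/2 : ℝ) * Real.log Sg₁.det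
        - (1/2) * ∑ i, (Y i - μ) ⬝ᵥ (Sg₂⁻¹ *ᵥ (Y i - μ)) - (N₂/2 : ℝ) * Real.log Sg₂.det
    let Mx : (Fin d → ℝ) → ℝ := fun μ => (Xbar - μ) ⬝ᵥ (S₁⁻¹ *ᵥ (Xbar - μ))
    let My : (Fin d → ℝ) → ℝ := fun μ => (Ybar - μ) ⬝ᵥ (S₂⁻¹ *ᵥ (Ybar - μ))
    let profile : (Fin d → ℝ) → ℝ := fun μ =>
      -(((N₁ : ℝ) + N₂) * d) / 2 - (N₁/2 : ℝ) * Real.log S₁.det - (N₂/2 : ℝ) * Real.log S₂.det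
        - (N₁/2 : ℝ) * Real.log (1 + Mx μ) - (N₂/2 : ℝ) * Real.log (1 + My μ)
    let prod : (Fin d → ℝ) → ℝ := fun μ =>
      (1 + Mx μ) ^ ((N₁ : ℝ)/2) * (1 + My μ) ^ ((N₂ : ℝ)/2)
    S₁.PosDef → S₂.PosDef →
    ((∀ μ : Fin d → ℝ,
        sSup {x : ℝ | ∃ Sg₁ Sg₂ : Matrix (Fin d) (Fin d) ℝ,
          Sg₁.PosDef ∧ Sg₂.PosDef ∧ x = l μ Sg₁ Sg₂} = profile μ) ∧
     (∀ μstar : Fin d → ℝ,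
        (∀ μ : Fin d → ℝ, profile μ ≤ profile μstar) ↔
        (∀ μ : Fin d → ℝ, prod μstar ≤ prod μ))) := by
  intro Xbar Ybar S₁ S₂ l Mx My profile prod hS₁ hS₂
  have hXbar : sampleMean X = Xbar := by simp [sampleMean, Xbar]
  have hYbar : sampleMean Y = Ybar := by simp [sampleMean, Ybar]
  have hS₁X : sampleCov X = S₁ := by simp [sampleCov, hXbar, S₁]
  have hS₂Y : sampleCov Y = S₂ := by simp [sampleCov, hYbar, S₂]
  refine ⟨fun μ => ?_, fun μstar => ?_⟩
  · have hl : ∀ C₁ C₂, l μ C₁ C₂ = gaussianLogLik X μ C₁ + gaussianLogLik Y μ C₂ := by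
      intro C₁ C₂
      simp only [l, gaussianLogLik, Fintype.card_fin]
      ring
    simp only [hl]
    refine (csSup_setOf_add_eq_of_isGreatest (isGreatest_gaussianLogLik (hS₁X ▸ hS₁) μ)
      (isGreatest_gaussianLogLik (hS₂Y ▸ hS₂) μ)).trans ?_
    simp only [profile, Mx, My, hXbar, hYbar, hS₁X, hS₂Y, Fintype.card_fin]
    ring
  · have hX : ∀ μ, 0 < 1 + Mx μ := fun μ => hS₁.one_add_dotProduct_inv_mulVec_pos (Xbar - μ)
    have hY : ∀ μ, 0 < 1 + My μ := fun μ => hS₂.one_add_dotProduct_inv_mulVec_pos (Ybar - μ)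
    refine forall_le_iff_forall_le_of_eq_const_sub_log
      (-(((N₁ : ℝ) + N₂) * d) / 2 - (N₁/2 : ℝ) * log S₁.det - (N₂/2 : ℝ) * log S₂.det)
      (fun μ => mul_pos (rpow_pos_of_pos (hX μ) _) (rpow_pos_of_pos (hY μ) _)) (fun μ => ?_) μstar
    simp only [profile]
    rw [log_mul (rpow_pos_of_pos (hX μ) _).ne' (rpow_pos_of_pos (hY μ) _).ne',
      log_rpow (hX μ), log_rpow (hY μ)]
    ring

theorem stmt2 (d N₁ N₂ : ℕ) (hN₁ : 1 ≤ N₁) (hN₂ : 1 ≤ N₂)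
    (X : Fin N₁ → Fin d → ℝ) (Y : Fin N₂ → Fin d → ℝ) :
    let Xbar : Fin d → ℝ := (N₁ : ℝ)⁻¹ • ∑ i, X i
    let Ybar : Fin d → ℝ := (N₂ : ℝ)⁻¹ • ∑ i, Y i
    let S₁ : Matrix (Fin d) (Fin d) ℝ :=
      (N₁ : ℝ)⁻¹ • ∑ i, vecMulVec (X i - Xbar) (X i - Xbar)
    let S₂ : Matrix (Fin d) (Fin d) ℝ :=
      (N₂ : ℝ)⁻¹ • ∑ i, vecMulVec (Y i - Ybar) (Y i - Ybar)
    let l : (Fin d → ℝ) → Matrix (Fin d) (Fin d) ℝ → Matrix (Fin d) (Fin d) ℝ → ℝ :=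
      fun μ Sg₁ Sg₂ =>
        -(1/2) * ∑ i, (X i - μ) ⬝ᵥ (Sg₁⁻¹ *ᵥ (X i - μ)) - (N₁/2 : ℝ) * Real.log Sg₁.det
        - (1/2) * ∑ i, (Y i - μ) ⬝ᵥ (Sg₂⁻¹ *ᵥ (Y i - μ)) - (N₂/2 : ℝ) * Real.log Sg₂.det
    let Mx : (Fin d → ℝ) → ℝ := fun μ => (Xbar - μ) ⬝ᵥ (S₁⁻¹ *ᵥ (Xbar - μ))
    let My : (Fin d → ℝ) → ℝ := fun μ => (Ybar - μ) ⬝ᵥ (S₂⁻¹ *ᵥ (Ybar - μ))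
    let profile : (Fin d → ℝ) → ℝ := fun μ =>
      -(((N₁ : ℝ) + N₂) * d) / 2 - (N₁/2 : ℝ) * Real.log S₁.det - (N₂/2 : ℝ) * Real.log S₂.det
        - (N₁/2 : ℝ) * Real.log (1 + Mx μ) - (N₂/2 : ℝ) * Real.log (1 + My μ)
    let prod : (Fin d → ℝ) → ℝ := fun μ =>
      (1 + Mx μ) ^ ((N₁ : ℝ)/2) * (1 + My μ) ^ ((N₂ : ℝ)/2)
    S₁.PosDef → S₂.PosDef →
    ((∀ μ : Fin d → ℝ,
        sSup {x : ℝ | ∃ Sg₁ Sg₂ : Matrix (Fin d) (Fin d) ℝ,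
          Sg₁.PosDef ∧ Sg₂.PosDef ∧ x = l μ Sg₁ Sg₂} = profile μ) ∧
     (∀ μstar : Fin d → ℝ,
        (∀ μ : Fin d → ℝ, profile μ ≤ profile μstar) ↔
        (∀ μ : Fin d → ℝ, prod μstar ≤ prod μ))) :=
  stmt2_general d N₁ N₂ X Y
end

section
/- Let μ̂ ∈ ℝ^d minimize the Behrens–Fisher objective F(μ) = (N_1/2) log(1 + M_X(μ)) + (N_2/2) log(1 + M_Y(μ)) over μ ∈ ℝ^d. Then μ̂ also minimizes M_Y(μ) over the set {μ ∈ ℝ^d : M_X(μ) ≤ M_X(μ̂)}; that is, μ̂ solves the Ellipsoidal Mean Estimation Problem with respect to X at level M_X(μ̂). -/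
/-! The objective is `(N₁/2) log (1 + M_X) + (N₂/2) log (1 + M_Y)`, a function of the two
Mahalanobis distances that is nondecreasing in `M_X` and strictly increasing in `M_Y` on
`[0, ∞)²`. A point with no larger `M_X` and strictly smaller `M_Y` than `μ̂` would therefore
have strictly smaller objective, contradicting minimality. -/

open Matrix Real

lemma Matrix.PosDef.dotProduct_inv_mulVec_nonneg {n : Type*} [Fintype n] [DecidableEq n]
    {S : Matrix n n ℝ} (hS : S.PosDef) (v : n → ℝ) : 0 ≤ v ⬝ᵥ (S⁻¹ *ᵥ v) := by
  simpa only [star_trivial] using hS.inv.posSemidef.dotProduct_mulVec_nonneg v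

lemma weighted_log_one_add_lt_weighted_log_one_add {a b x x' y y' : ℝ} (ha : 0 ≤ a)
    (hb : 0 < b) (hx : 0 ≤ x) (hy : 0 ≤ y) (hxx' : x ≤ x') (hyy' : y < y') :
    a * log (1 + x) + b * log (1 + y) < a * log (1 + x') + b * log (1 + y') := by
  have hlog_x : log (1 + x) ≤ log (1 + x') := log_le_log (by linarith) (by linarith)
  have hlog_y : log (1 + y) < log (1 + y') := log_lt_log (by linarith) (by linarith)
  exact add_lt_add_of_le_of_lt (mul_le_mul_of_nonneg_left hlog_x ha)
    (mul_lt_mul_of_pos_left hlog_y hb)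

theorem stmt3_general (d : ℕ)
    (S₁ S₂ : Matrix (Fin d) (Fin d) ℝ) (hS₁ : S₁.PosDef) (hS₂ : S₂.PosDef)
    (Xbar Ybar : Fin d → ℝ) (N₁ N₂ : ℝ) (hN₁ : 0 < N₁) (hN₂ : 0 < N₂)
    (Mx My F : (Fin d → ℝ) → ℝ)
    (hMx : Mx = fun μ => (Xbar - μ) ⬝ᵥ (S₁⁻¹ *ᵥ (Xbar - μ)))
    (hMy : My = fun μ => (Ybar - μ) ⬝ᵥ (S₂⁻¹ *ᵥ (Ybar - μ)))
    (hF : F = fun μ => (N₁/2) * Real.log (1 + Mx μ) + (N₂/2) * Real.log (1 + My μ))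
    (μhat : Fin d → ℝ) (hmin : ∀ μ : Fin d → ℝ, F μhat ≤ F μ) :
    ∀ μ : Fin d → ℝ, Mx μ ≤ Mx μhat → My μhat ≤ My μ := by
  subst hMx hMy hF
  intro μ hx
  by_contra! hy
  exact (hmin μ).not_gt <| weighted_log_one_add_lt_weighted_log_one_add
    (half_pos hN₁).le (half_pos hN₂) (hS₁.dotProduct_inv_mulVec_nonneg _)
    (hS₂.dotProduct_inv_mulVec_nonneg _) hx hy

theorem stmt3 (d : ℕ) (hd : 1 ≤ d)
    (S₁ S₂ : Matrix (Fin d) (Fin d) ℝ) (hS₁ : S₁.PosDef) (hS₂ : S₂.PosDef)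
    (Xbar Ybar : Fin d → ℝ) (N₁ N₂ : ℝ) (hN₁ : 0 < N₁) (hN₂ : 0 < N₂)
    (Mx My F : (Fin d → ℝ) → ℝ)
    (hMx : Mx = fun μ => (Xbar - μ) ⬝ᵥ (S₁⁻¹ *ᵥ (Xbar - μ)))
    (hMy : My = fun μ => (Ybar - μ) ⬝ᵥ (S₂⁻¹ *ᵥ (Ybar - μ)))
    (hF : F = fun μ => (N₁/2) * Real.log (1 + Mx μ) + (N₂/2) * Real.log (1 + My μ))
    (μhat : Fin d → ℝ) (hmin : ∀ μ : Fin d → ℝ, F μhat ≤ F μ) :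
    ∀ μ : Fin d → ℝ, Mx μ ≤ Mx μhat → My μhat ≤ My μ :=
  stmt3_general d S₁ S₂ hS₁ hS₂ Xbar Ybar N₁ N₂ hN₁ hN₂ Mx My F hMx hMy hF μhat hmin
end

section
/- Define h_X : [0, ∞) → ℝ by h_X(v) = inf { M_Y(μ) : μ ∈ ℝ^d, M_X(μ) ≤ v }. Then h_X is convex on [0, ∞) and antitone (nonincreasing) on [0, ∞). -/
/-!
A convex objective minimised over the sublevel sets of a convex constraint has a value function
that is convex in the level: near-optimal points for two levels combine convexly into a feasible
point for the combined level, whose objective value is at most the combination of theirs. Both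
Mahalanobis distances are convex quadratics, and `M_X(X̄) = 0` makes every level `v ≥ 0` feasible.
-/

open Matrix Real

section QuadraticForm

variable {n : Type*} [Fintype n]

theorem Matrix.dotProduct_mulVec_combo_add {R : Type*} [CommRing R] (A : Matrix n n R)
    (x y : n → R) {a b : R} (hab : a + b = 1) :
    (a • x + b • y) ⬝ᵥ (A *ᵥ (a • x + b • y)) + a * b * ((x - y) ⬝ᵥ (A *ᵥ (x - y))) =
      a * (x ⬝ᵥ (A *ᵥ x)) + b * (y ⬝ᵥ (A *ᵥ y)) := by
  obtain rfl : b = 1 - a := eq_sub_of_add_eq' hab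
  simp only [mulVec_add, mulVec_sub, mulVec_smul, add_dotProduct, dotProduct_add,
    sub_dotProduct, dotProduct_sub, smul_dotProduct, dotProduct_smul, smul_eq_mul]
  ring

theorem Matrix.PosSemidef.convexOn_dotProduct_mulVec {A : Matrix n n ℝ} (hA : A.PosSemidef) :
    ConvexOn ℝ Set.univ fun x => x ⬝ᵥ (A *ᵥ x) := by
  refine ⟨convex_univ, fun x _ y _ a b ha hb hab => ?_⟩
  have hxy : 0 ≤ (x - y) ⬝ᵥ (A *ᵥ (x - y)) := hA.dotProduct_mulVec_nonneg (x - y)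
  have hcombo := A.dotProduct_mulVec_combo_add x y hab
  simp only [smul_eq_mul]
  nlinarith [mul_nonneg (mul_nonneg ha hb) hxy]

theorem Matrix.PosSemidef.convexOn_sub_dotProduct_mulVec {A : Matrix n n ℝ} (hA : A.PosSemidef)
    (c : n → ℝ) : ConvexOn ℝ Set.univ fun μ => (c - μ) ⬝ᵥ (A *ᵥ (c - μ)) := by
  refine ⟨convex_univ, fun x _ y _ a b ha hb hab => ?_⟩
  have hcombo : c - (a • x + b • y) = a • (c - x) + b • (c - y) := by
    rw [smul_sub, smul_sub, sub_add_sub_comm, Convex.combo_self hab]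
  simpa only [hcombo] using
    hA.convexOn_dotProduct_mulVec.2 (Set.mem_univ (c - x)) (Set.mem_univ (c - y)) ha hb hab

end QuadraticForm

section SublevelInf

variable {E : Type*} {f g : E → ℝ} {s : Set ℝ}

noncomputable def sublevelInf (f g : E → ℝ) (v : ℝ) : ℝ :=
  sInf {t : ℝ | ∃ x, f x ≤ v ∧ t = g x}

theorem sublevelInf_le (hg : BddBelow (Set.range g)) {x : E} {v : ℝ} (hx : f x ≤ v) :
    sublevelInf f g v ≤ g x := by
  obtain ⟨m, hm⟩ := hg
  exact csInf_le ⟨m, by rintro _ ⟨y, -, rfl⟩; exact hm ⟨y, rfl⟩⟩ ⟨x, hx, rfl⟩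

theorem exists_lt_sublevelInf_add {v ε : ℝ} (hv : ∃ x, f x ≤ v) (hε : 0 < ε) :
    ∃ x, f x ≤ v ∧ g x < sublevelInf f g v + ε := by
  obtain ⟨x, hx⟩ := hv
  obtain ⟨_, ⟨y, hy, rfl⟩, hlt⟩ :=
    Real.lt_sInf_add_pos (s := {t | ∃ x, f x ≤ v ∧ t = g x}) ⟨g x, x, hx, rfl⟩ hε
  exact ⟨y, hy, hlt⟩

theorem antitoneOn_sublevelInf (hg : BddBelow (Set.range g)) (hfeas : ∀ v ∈ s, ∃ x, f x ≤ v) :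
    AntitoneOn (sublevelInf f g) s := by
  intro v₁ hv₁ v₂ _ hle
  refine le_of_forall_pos_le_add fun ε hε => ?_
  obtain ⟨x, hx, hlt⟩ := exists_lt_sublevelInf_add (g := g) (hfeas v₁ hv₁) hε
  exact (sublevelInf_le hg (hx.trans hle)).trans hlt.le

theorem convexOn_sublevelInf [AddCommGroup E] [Module ℝ E] (hf : ConvexOn ℝ Set.univ f)
    (hg : ConvexOn ℝ Set.univ g) (hgb : BddBelow (Set.range g)) (hs : Convex ℝ s) (hfeas : ∀ v ∈ s, ∃ x, f x ≤ v) :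
    ConvexOn ℝ s (sublevelInf f g) := by
  refine ⟨hs, fun v₁ hv₁ v₂ hv₂ a b ha hb hab => le_of_forall_pos_le_add fun ε hε => ?_⟩
  obtain ⟨x₁, hx₁, hlt₁⟩ := exists_lt_sublevelInf_add (g := g) (hfeas v₁ hv₁) hε
  obtain ⟨x₂, hx₂, hlt₂⟩ := exists_lt_sublevelInf_add (g := g) (hfeas v₂ hv₂) hε
  have hfeas_combo : f (a • x₁ + b • x₂) ≤ a • v₁ + b • v₂ :=
    (hf.2 (Set.mem_univ _) (Set.mem_univ _) ha hb hab).trans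
      (add_le_add (smul_le_smul_of_nonneg_left hx₁ ha) (smul_le_smul_of_nonneg_left hx₂ hb))
  calc sublevelInf f g (a • v₁ + b • v₂)
      ≤ g (a • x₁ + b • x₂) := sublevelInf_le hgb hfeas_combo
    _ ≤ a • g x₁ + b • g x₂ := hg.2 (Set.mem_univ _) (Set.mem_univ _) ha hb hab
    _ ≤ a • (sublevelInf f g v₁ + ε) + b • (sublevelInf f g v₂ + ε) := by
      gcongr
    _ = a • sublevelInf f g v₁ + b • sublevelInf f g v₂ + ε := by
      rw [smul_add, smul_add, add_add_add_comm, Convex.combo_self hab]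

end SublevelInf

theorem stmt5_general (d : ℕ)
    (S₁ S₂ : Matrix (Fin d) (Fin d) ℝ) (hS₁ : S₁.PosDef) (hS₂ : S₂.PosDef)
    (Xbar Ybar : Fin d → ℝ)
    (Mx My : (Fin d → ℝ) → ℝ)
    (hMx : Mx = fun μ => (Xbar - μ) ⬝ᵥ (S₁⁻¹ *ᵥ (Xbar - μ)))
    (hMy : My = fun μ => (Ybar - μ) ⬝ᵥ (S₂⁻¹ *ᵥ (Ybar - μ)))
    (hX : ℝ → ℝ)
    (hhX : hX = fun v => sInf {t : ℝ | ∃ μ : Fin d → ℝ, Mx μ ≤ v ∧ t = My μ}) :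
    ConvexOn ℝ (Set.Ici (0 : ℝ)) hX ∧ AntitoneOn hX (Set.Ici (0 : ℝ)) := by
  have hMx_convex : ConvexOn ℝ Set.univ Mx :=
    hMx ▸ hS₁.inv.posSemidef.convexOn_sub_dotProduct_mulVec Xbar
  have hMy_convex : ConvexOn ℝ Set.univ My :=
    hMy ▸ hS₂.inv.posSemidef.convexOn_sub_dotProduct_mulVec Ybar
  have hMy_bdd : BddBelow (Set.range My) := by
    refine ⟨0, ?_⟩
    rintro _ ⟨μ, rfl⟩
    simpa only [hMy, star_trivial] using hS₂.inv.posSemidef.dotProduct_mulVec_nonneg (Ybar - μ)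
  have hfeas : ∀ v ∈ Set.Ici (0 : ℝ), ∃ μ, Mx μ ≤ v := fun v hv =>
    ⟨Xbar, by simpa [hMx] using hv⟩
  have hX_eq : hX = sublevelInf Mx My := hhX
  rw [hX_eq]
  exact ⟨convexOn_sublevelInf hMx_convex hMy_convex hMy_bdd (convex_Ici 0) hfeas,
    antitoneOn_sublevelInf hMy_bdd hfeas⟩

theorem stmt5 (d : ℕ) (hd : 1 ≤ d)
    (S₁ S₂ : Matrix (Fin d) (Fin d) ℝ) (hS₁ : S₁.PosDef) (hS₂ : S₂.PosDef)
    (Xbar Ybar : Fin d → ℝ)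
    (Mx My : (Fin d → ℝ) → ℝ)
    (hMx : Mx = fun μ => (Xbar - μ) ⬝ᵥ (S₁⁻¹ *ᵥ (Xbar - μ)))
    (hMy : My = fun μ => (Ybar - μ) ⬝ᵥ (S₂⁻¹ *ᵥ (Ybar - μ)))
    (hX : ℝ → ℝ)
    (hhX : hX = fun v => sInf {t : ℝ | ∃ μ : Fin d → ℝ, Mx μ ≤ v ∧ t = My μ}) :
    ConvexOn ℝ (Set.Ici (0 : ℝ)) hX ∧ AntitoneOn hX (Set.Ici (0 : ℝ)) :=
  stmt5_general d S₁ S₂ hS₁ hS₂ Xbar Ybar Mx My hMx hMy hX hhX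
end

section
/- The Likelihood Ratio statistic is bounded above by the Wald statistic: inf_{μ ∈ ℝ^d} [ N_1 log(1 + M_X(μ)) + N_2 log(1 + M_Y(μ)) ] ≤ (X̄ − Ȳ)ᵀ (S_1/N_1 + S_2/N_2)⁻¹ (X̄ − Ȳ). -/
open Matrix Real

/-! The infimum is at most the value at `μ = X̄ - (S₁/N₁) (S₁/N₁ + S₂/N₂)⁻¹ (X̄ - Ȳ)`.
Since `log (1 + m) ≤ m`, that value is at most `N₁ M_X(μ) + N₂ M_Y(μ)`, and at this `μ` the sum
equals `W` exactly: `μ` is the minimiser of the quadratic surrogate. -/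

namespace Matrix

variable {n : Type*} [Fintype n] [DecidableEq n]

theorem dotProduct_inv_mulVec_add_dotProduct_inv_mulVec_eq {K : Type*} [CommRing K]
    {A B : Matrix n n K} (hA : IsUnit A.det) (hB : IsUnit B.det) (hAB : IsUnit (A + B).det)
    (x y μ : n → K)
    (hμ : μ = x - A *ᵥ ((A + B)⁻¹ *ᵥ (x - y))) :
    (x - μ) ⬝ᵥ (A⁻¹ *ᵥ (x - μ)) + (y - μ) ⬝ᵥ (B⁻¹ *ᵥ (y - μ)) =
      (x - y) ⬝ᵥ ((A + B)⁻¹ *ᵥ (x - y)) := by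
  set w := (A + B)⁻¹ *ᵥ (x - y)
  have hw : (A + B) *ᵥ w = x - y := by
    rw [mulVec_mulVec, mul_nonsing_inv _ hAB, one_mulVec]
  have hx : x - μ = A *ᵥ w := by rw [hμ, sub_sub_cancel]
  have hy : y - μ = -(B *ᵥ w) := by
    rw [hμ, ← sub_add, ← neg_sub x y, ← hw, add_mulVec]; abel
  have cancel {M : Matrix n n K} (hM : IsUnit M.det) : M⁻¹ *ᵥ (M *ᵥ w) = w := by
    rw [mulVec_mulVec, nonsing_inv_mul _ hM, one_mulVec]
  rw [hx, hy, mulVec_neg, neg_dotProduct, dotProduct_neg, neg_neg, cancel hA, cancel hB,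
    ← add_dotProduct, ← add_mulVec, hw]

theorem mul_dotProduct_inv_mulVec_eq_inv_smul {K : Type*} [Field K] {S : Matrix n n K}
    (hS : IsUnit S.det) {c : K} (hc : c ≠ 0) (u : n → K) :
    c * (u ⬝ᵥ (S⁻¹ *ᵥ u)) = u ⬝ᵥ ((c⁻¹ • S)⁻¹ *ᵥ u) := by
  have h : (c⁻¹ • S)⁻¹ = c • S⁻¹ := inv_eq_left_inv (by simp [hc, smul_smul, nonsing_inv_mul _ hS])
  rw [h, smul_mulVec, dotProduct_smul, smul_eq_mul]

theorem PosDef.dotProduct_inv_mulVec_nonneg_s8 {S : Matrix n n ℝ} (hS : S.PosDef) (u : n → ℝ) :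
    0 ≤ u ⬝ᵥ (S⁻¹ *ᵥ u) := by
  simpa using hS.inv.posSemidef.dotProduct_mulVec_nonneg u

end Matrix

theorem Real.mul_log_one_add_le_mul {c m : ℝ} (hc : 0 ≤ c) (hm : 0 ≤ m) :
    c * log (1 + m) ≤ c * m :=
  mul_le_mul_of_nonneg_left (by linarith [log_le_sub_one_of_pos (by linarith : 0 < 1 + m)]) hc

theorem stmt8_general (d : ℕ)
    (S₁ S₂ : Matrix (Fin d) (Fin d) ℝ) (hS₁ : S₁.PosDef) (hS₂ : S₂.PosDef)
    (Xbar Ybar : Fin d → ℝ) (N₁ N₂ : ℝ) (hN₁ : 0 < N₁) (hN₂ : 0 < N₂)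
    (Mx My : (Fin d → ℝ) → ℝ)
    (hMx : Mx = fun μ => (Xbar - μ) ⬝ᵥ (S₁⁻¹ *ᵥ (Xbar - μ)))
    (hMy : My = fun μ => (Ybar - μ) ⬝ᵥ (S₂⁻¹ *ᵥ (Ybar - μ)))
    (W : ℝ)
    (hW : W = (Xbar - Ybar) ⬝ᵥ ((N₁⁻¹ • S₁ + N₂⁻¹ • S₂)⁻¹ *ᵥ (Xbar - Ybar))) :
    (⨅ μ : Fin d → ℝ, N₁ * Real.log (1 + Mx μ) + N₂ * Real.log (1 + My μ)) ≤ W := by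
  subst hMx hMy hW
  beta_reduce
  have hT₁ := hS₁.smul (inv_pos.2 hN₁)
  have hT₂ := hS₂.smul (inv_pos.2 hN₂)
  set μ := Xbar - (N₁⁻¹ • S₁) *ᵥ ((N₁⁻¹ • S₁ + N₂⁻¹ • S₂)⁻¹ *ᵥ (Xbar - Ybar))
  have isUnit_det {S : Matrix (Fin d) (Fin d) ℝ} (hS : S.PosDef) : IsUnit S.det :=
    hS.det_pos.ne'.isUnit
  have hWμ := dotProduct_inv_mulVec_add_dotProduct_inv_mulVec_eq (isUnit_det hT₁)
    (isUnit_det hT₂) (isUnit_det (hT₁.add hT₂)) Xbar Ybar μ rfl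
  rw [← mul_dotProduct_inv_mulVec_eq_inv_smul (isUnit_det hS₁) hN₁.ne',
    ← mul_dotProduct_inv_mulVec_eq_inv_smul (isUnit_det hS₂) hN₂.ne'] at hWμ
  have hbdd : BddBelow (Set.range fun ν =>
      N₁ * log (1 + (Xbar - ν) ⬝ᵥ (S₁⁻¹ *ᵥ (Xbar - ν))) +
        N₂ * log (1 + (Ybar - ν) ⬝ᵥ (S₂⁻¹ *ᵥ (Ybar - ν)))) := by
    refine ⟨0, Set.forall_mem_range.2 fun ν => ?_⟩
    have h₁ := log_nonneg (le_add_of_nonneg_right (hS₁.dotProduct_inv_mulVec_nonneg_s8 (Xbar - ν)))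
    have h₂ := log_nonneg (le_add_of_nonneg_right (hS₂.dotProduct_inv_mulVec_nonneg_s8 (Ybar - ν)))
    positivity
  calc _ ≤ _ := ciInf_le hbdd μ
    _ ≤ _ := add_le_add
        (mul_log_one_add_le_mul hN₁.le (hS₁.dotProduct_inv_mulVec_nonneg_s8 _))
        (mul_log_one_add_le_mul hN₂.le (hS₂.dotProduct_inv_mulVec_nonneg_s8 _))
    _ = _ := hWμ

theorem stmt8 (d : ℕ) (hd : 1 ≤ d)
    (S₁ S₂ : Matrix (Fin d) (Fin d) ℝ) (hS₁ : S₁.PosDef) (hS₂ : S₂.PosDef)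
    (Xbar Ybar : Fin d → ℝ) (N₁ N₂ : ℝ) (hN₁ : 0 < N₁) (hN₂ : 0 < N₂)
    (Mx My : (Fin d → ℝ) → ℝ)
    (hMx : Mx = fun μ => (Xbar - μ) ⬝ᵥ (S₁⁻¹ *ᵥ (Xbar - μ)))
    (hMy : My = fun μ => (Ybar - μ) ⬝ᵥ (S₂⁻¹ *ᵥ (Ybar - μ)))
    (W : ℝ)
    (hW : W = (Xbar - Ybar) ⬝ᵥ ((N₁⁻¹ • S₁ + N₂⁻¹ • S₂)⁻¹ *ᵥ (Xbar - Ybar))) :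
    (⨅ μ : Fin d → ℝ, N₁ * Real.log (1 + Mx μ) + N₂ * Real.log (1 + My μ)) ≤ W :=
  stmt8_general d S₁ S₂ hS₁ hS₂ Xbar Ybar N₁ N₂ hN₁ hN₂ Mx My hMx hMy W hW
end

section
/- Let μ̂_0 = (N_1 S_1⁻¹ + N_2 S_2⁻¹)⁻¹ (N_1 S_1⁻¹ X̄ + N_2 S_2⁻¹ Ȳ). Then for every μ ∈ ℝ^d, N_1 M_X(μ) + N_2 M_Y(μ) ≥ N_1 M_X(μ̂_0) + N_2 M_Y(μ̂_0) = (X̄ − Ȳ)ᵀ (S_1/N_1 + S_2/N_2)⁻¹ (X̄ − Ȳ). In particular, the minimum value of μ ↦ N_1 M_X(μ) + N_2 M_Y(μ) equals the Wald statistic W. -/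
open Matrix Real

/-!
With `P = N₁ S₁⁻¹`, `Q = N₂ S₂⁻¹` and `A = P + Q`, the objective is
`f μ = (X̄ - μ)ᵀ P (X̄ - μ) + (Ȳ - μ)ᵀ Q (Ȳ - μ)`, and `μ̂₀` solves its normal equation
`A μ̂₀ = P X̄ + Q Ȳ`. Completing the square gives `f μ = f μ̂₀ + (μ - μ̂₀)ᵀ A (μ - μ̂₀)`.
At the minimiser the residuals `u = X̄ - μ̂₀` and `v = Ȳ - μ̂₀` satisfy `P u + Q v = 0` and
`u - v = X̄ - Ȳ`, so `f μ̂₀ = (X̄ - Ȳ)ᵀ P u` with `u = A⁻¹ Q (X̄ - Ȳ)`; finally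
`P A⁻¹ Q = (P⁻¹ + Q⁻¹)⁻¹`.
-/

namespace Matrix

variable {n R : Type*} [Fintype n] [CommRing R]

def twoSampleObjective (P Q : Matrix n n R) (x y μ : n → R) : R :=
  (x - μ) ⬝ᵥ P *ᵥ (x - μ) + (y - μ) ⬝ᵥ Q *ᵥ (y - μ)

lemma IsSymm.dotProduct_mulVec_comm {P : Matrix n n R} (hP : P.IsSymm) (a b : n → R) :
    a ⬝ᵥ P *ᵥ b = b ⬝ᵥ P *ᵥ a := by
  rw [dotProduct_comm, dotProduct_mulVec, ← vecMul_transpose, hP.eq]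

lemma mulVec_sub_add_mulVec_sub_eq_zero {P Q : Matrix n n R} {x y μ₀ : n → R}
    (hμ₀ : (P + Q) *ᵥ μ₀ = P *ᵥ x + Q *ᵥ y) : P *ᵥ (x - μ₀) + Q *ᵥ (y - μ₀) = 0 := by
  rw [mulVec_sub, mulVec_sub, sub_add_sub_comm, ← add_mulVec, hμ₀, sub_self]

lemma twoSampleObjective_eq_add_of_mulVec_eq {P Q : Matrix n n R} (hP : P.IsSymm) (hQ : Q.IsSymm)
    {x y μ₀ : n → R} (hμ₀ : (P + Q) *ᵥ μ₀ = P *ᵥ x + Q *ᵥ y) (μ : n → R) :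
    twoSampleObjective P Q x y μ =
      twoSampleObjective P Q x y μ₀ + (μ - μ₀) ⬝ᵥ (P + Q) *ᵥ (μ - μ₀) := by
  set h := μ - μ₀
  have hnormal : h ⬝ᵥ (P *ᵥ (x - μ₀) + Q *ᵥ (y - μ₀)) = 0 := by
    rw [mulVec_sub_add_mulVec_sub_eq_zero hμ₀, dotProduct_zero]
  have hx : x - μ = (x - μ₀) - h := by simp only [h]; abel
  have hy : y - μ = (y - μ₀) - h := by simp only [h]; abel
  unfold twoSampleObjective
  rw [hx, hy]
  simp only [sub_dotProduct, dotProduct_sub, mulVec_sub, add_mulVec, dotProduct_add,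
    hP.dotProduct_mulVec_comm (x - μ₀) h,
    hQ.dotProduct_mulVec_comm (y - μ₀) h] at hnormal ⊢
  linear_combination (-2 : R) * hnormal

variable [DecidableEq n]

lemma twoSampleObjective_of_mulVec_eq {P Q : Matrix n n R} (hA : IsUnit (P + Q))
    {x y μ₀ : n → R} (hμ₀ : (P + Q) *ᵥ μ₀ = P *ᵥ x + Q *ᵥ y) :
    twoSampleObjective P Q x y μ₀ = (x - y) ⬝ᵥ (P * (P + Q)⁻¹ * Q) *ᵥ (x - y) := by
  have hnormal : Q *ᵥ (y - μ₀) = -(P *ᵥ (x - μ₀)) :=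
    eq_neg_of_add_eq_zero_right (mulVec_sub_add_mulVec_sub_eq_zero hμ₀)
  have hu : x - μ₀ = ((P + Q)⁻¹ * Q) *ᵥ (x - y) := by
    have hAu : (P + Q) *ᵥ (x - μ₀) = Q *ᵥ (x - y) := by
      rw [mulVec_sub, hμ₀, add_mulVec, mulVec_sub]; abel
    rw [← mulVec_mulVec, ← hAu, mulVec_mulVec,
      nonsing_inv_mul _ ((isUnit_iff_isUnit_det _).mp hA), one_mulVec]
  calc twoSampleObjective P Q x y μ₀
      = (x - μ₀) ⬝ᵥ P *ᵥ (x - μ₀) - (y - μ₀) ⬝ᵥ P *ᵥ (x - μ₀) := by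
        rw [twoSampleObjective, hnormal, dotProduct_neg]; ring
    _ = (x - y) ⬝ᵥ P *ᵥ (x - μ₀) := by rw [← sub_dotProduct, sub_sub_sub_cancel_right]
    _ = (x - y) ⬝ᵥ (P * (P + Q)⁻¹ * Q) *ᵥ (x - y) := by rw [hu, mulVec_mulVec, mul_assoc]

lemma inv_add_inv_inv {P Q : Matrix n n R} (hP : IsUnit P) (hQ : IsUnit Q) :
    (P⁻¹ + Q⁻¹)⁻¹ = P * (P + Q)⁻¹ * Q := by
  rw [add_comm P⁻¹, inv_add_inv (iff_of_true hQ hP), mul_inv_rev, mul_inv_rev,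
    nonsing_inv_nonsing_inv _ ((isUnit_iff_isUnit_det P).mp hP),
    nonsing_inv_nonsing_inv _ ((isUnit_iff_isUnit_det Q).mp hQ), add_comm Q, mul_assoc]

lemma smul_inv_inv {K : Type*} [Field K] {S : Matrix n n K} (hS : IsUnit S) {c : K}
    (hc : c ≠ 0) : (c • S⁻¹)⁻¹ = c⁻¹ • S :=
  inv_eq_left_inv <| by
    rw [smul_mul_smul_comm, mul_nonsing_inv _ ((isUnit_iff_isUnit_det _).mp hS),
      inv_mul_cancel₀ hc, one_smul]

end Matrix

theorem stmt9_general (d : ℕ)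
    (S₁ S₂ : Matrix (Fin d) (Fin d) ℝ) (hS₁ : S₁.PosDef) (hS₂ : S₂.PosDef)
    (Xbar Ybar : Fin d → ℝ) (N₁ N₂ : ℝ) (hN₁ : 0 < N₁) (hN₂ : 0 < N₂)
    (Mx My : (Fin d → ℝ) → ℝ)
    (hMx : Mx = fun μ => (Xbar - μ) ⬝ᵥ (S₁⁻¹ *ᵥ (Xbar - μ)))
    (hMy : My = fun μ => (Ybar - μ) ⬝ᵥ (S₂⁻¹ *ᵥ (Ybar - μ)))
    (W : ℝ)
    (hW : W = (Xbar - Ybar) ⬝ᵥ ((N₁⁻¹ • S₁ + N₂⁻¹ • S₂)⁻¹ *ᵥ (Xbar - Ybar)))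
    (μhat₀ : Fin d → ℝ)
    (hμhat₀ : μhat₀ = (N₁ • S₁⁻¹ + N₂ • S₂⁻¹)⁻¹ *ᵥ (N₁ • (S₁⁻¹ *ᵥ Xbar) + N₂ • (S₂⁻¹ *ᵥ Ybar))) :
    (∀ μ : Fin d → ℝ, N₁ * Mx μhat₀ + N₂ * My μhat₀ ≤ N₁ * Mx μ + N₂ * My μ) ∧
    N₁ * Mx μhat₀ + N₂ * My μhat₀ = W := by
  set P := N₁ • S₁⁻¹
  set Q := N₂ • S₂⁻¹
  have hP : P.PosDef := hS₁.inv.smul hN₁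
  have hQ : Q.PosDef := hS₂.inv.smul hN₂
  have hA : IsUnit (P + Q) := (hP.add hQ).isUnit
  have hobj (μ : Fin d → ℝ) : N₁ * Mx μ + N₂ * My μ = twoSampleObjective P Q Xbar Ybar μ := by
    simp only [hMx, hMy, twoSampleObjective, P, Q, smul_mulVec, dotProduct_smul, smul_eq_mul]
  have hnormal : (P + Q) *ᵥ μhat₀ = P *ᵥ Xbar + Q *ᵥ Ybar := by
    rw [hμhat₀, mulVec_mulVec, mul_nonsing_inv _ ((isUnit_iff_isUnit_det _).mp hA), one_mulVec,
      smul_mulVec, smul_mulVec]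
  refine ⟨fun μ => ?_, ?_⟩
  · rw [hobj, hobj, twoSampleObjective_eq_add_of_mulVec_eq
      (isHermitian_iff_isSymm.mp hP.1) (isHermitian_iff_isSymm.mp hQ.1) hnormal μ]
    simpa using (hP.add hQ).posSemidef.dotProduct_mulVec_nonneg (μ - μhat₀)
  · rw [hobj, twoSampleObjective_of_mulVec_eq hA hnormal, hW,
      ← smul_inv_inv hS₁.isUnit hN₁.ne', ← smul_inv_inv hS₂.isUnit hN₂.ne',
      inv_add_inv_inv hP.isUnit hQ.isUnit]

theorem stmt9 (d : ℕ) (hd : 1 ≤ d)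
    (S₁ S₂ : Matrix (Fin d) (Fin d) ℝ) (hS₁ : S₁.PosDef) (hS₂ : S₂.PosDef)
    (Xbar Ybar : Fin d → ℝ) (N₁ N₂ : ℝ) (hN₁ : 0 < N₁) (hN₂ : 0 < N₂)
    (Mx My : (Fin d → ℝ) → ℝ)
    (hMx : Mx = fun μ => (Xbar - μ) ⬝ᵥ (S₁⁻¹ *ᵥ (Xbar - μ)))
    (hMy : My = fun μ => (Ybar - μ) ⬝ᵥ (S₂⁻¹ *ᵥ (Ybar - μ)))
    (W : ℝ)
    (hW : W = (Xbar - Ybar) ⬝ᵥ ((N₁⁻¹ • S₁ + N₂⁻¹ • S₂)⁻¹ *ᵥ (Xbar - Ybar)))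
    (μhat₀ : Fin d → ℝ)
    (hμhat₀ : μhat₀ = (N₁ • S₁⁻¹ + N₂ • S₂⁻¹)⁻¹ *ᵥ (N₁ • (S₁⁻¹ *ᵥ Xbar) + N₂ • (S₂⁻¹ *ᵥ Ybar))) :
    (∀ μ : Fin d → ℝ, N₁ * Mx μhat₀ + N₂ * My μhat₀ ≤ N₁ * Mx μ + N₂ * My μ) ∧
    N₁ * Mx μhat₀ + N₂ * My μhat₀ = W :=
  stmt9_general d S₁ S₂ hS₁ hS₂ Xbar Ybar N₁ N₂ hN₁ hN₂ Mx My hMx hMy W hW μhat₀ hμhat₀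
end

section
/- For every μ ∈ ℝ^d, setting Σ̂_1 = S_1 + (X̄ − μ)(X̄ − μ)ᵀ and Σ̂_2 = S_2 + (Ȳ − μ)(Ȳ − μ)ᵀ, one has N_1 log(1 + M_X(μ)) + N_2 log(1 + M_Y(μ)) ≥ N_1 (X̄ − μ)ᵀ Σ̂_1⁻¹ (X̄ − μ) + N_2 (Ȳ − μ)ᵀ Σ̂_2⁻¹ (Ȳ − μ). In particular, evaluated at the maximum likelihood estimator μ̂ under the null hypothesis (the minimizer of the left-hand side), this gives the inequality LR ≥ LM between the Likelihood Ratio and Lagrange Multiplier statistics for the Behrens–Fisher Problem. -/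
/-!
By Sherman–Morrison, `(S + v vᵀ)⁻¹ v = S⁻¹ v / (1 + M)` with `M = vᵀ S⁻¹ v`, so each LM term
equals `M / (1 + M) = 1 - (1 + M)⁻¹`, which is at most `log (1 + M)` by `1 - x⁻¹ ≤ log x`.
The inequality therefore holds summand by summand.
-/

open Matrix Real

namespace Matrix

variable {n K : Type*} [Fintype n] [DecidableEq n]

theorem inv_add_vecMulVec_mulVec [Field K] {S : Matrix n n K} (hS : IsUnit S.det)
    (u v : n → K) (hSu : IsUnit (S + vecMulVec u v).det) (hc : 1 + v ⬝ᵥ (S⁻¹ *ᵥ u) ≠ 0) :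
    (S + vecMulVec u v)⁻¹ *ᵥ u = (1 + v ⬝ᵥ (S⁻¹ *ᵥ u))⁻¹ • (S⁻¹ *ᵥ u) := by
  let := invertibleOfIsUnitDet _ hSu
  refine inv_mulVec_eq_vec ?_
  rw [mulVec_smul, add_mulVec, mulVec_mulVec, mul_nonsing_inv _ hS, one_mulVec,
    vecMulVec_mulVec]
  ext i
  simp only [Pi.smul_apply, Pi.add_apply, MulOpposite.smul_eq_mul_unop, MulOpposite.unop_op,
    smul_eq_mul]
  field_simp

theorem PosDef.dotProduct_inv_add_vecMulVec_self_mulVec {S : Matrix n n ℝ} (hS : S.PosDef)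
    (v : n → ℝ) :
    v ⬝ᵥ ((S + vecMulVec v v)⁻¹ *ᵥ v) = 1 - (1 + v ⬝ᵥ (S⁻¹ *ᵥ v))⁻¹ := by
  have hM : 0 ≤ v ⬝ᵥ (S⁻¹ *ᵥ v) := hS.inv.posSemidef.dotProduct_mulVec_nonneg v
  have hSv : (S + vecMulVec v v).PosDef := by
    simpa using hS.add_posSemidef (posSemidef_vecMulVec_self_star v)
  rw [inv_add_vecMulVec_mulVec hS.det_pos.ne'.isUnit v v hSv.det_pos.ne'.isUnit (by positivity),
    dotProduct_smul, smul_eq_mul]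
  field_simp
  ring

theorem PosDef.dotProduct_inv_add_vecMulVec_self_mulVec_le_log {S : Matrix n n ℝ}
    (hS : S.PosDef) (v : n → ℝ) :
    v ⬝ᵥ ((S + vecMulVec v v)⁻¹ *ᵥ v) ≤ log (1 + v ⬝ᵥ (S⁻¹ *ᵥ v)) := by
  have hM : 0 ≤ v ⬝ᵥ (S⁻¹ *ᵥ v) := hS.inv.posSemidef.dotProduct_mulVec_nonneg v
  rw [hS.dotProduct_inv_add_vecMulVec_self_mulVec]
  exact one_sub_inv_le_log_of_pos (by positivity)

end Matrix

theorem stmt11_general (d : ℕ)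
    (S₁ S₂ : Matrix (Fin d) (Fin d) ℝ) (hS₁ : S₁.PosDef) (hS₂ : S₂.PosDef)
    (Xbar Ybar : Fin d → ℝ) (N₁ N₂ : ℝ) (hN₁ : 0 < N₁) (hN₂ : 0 < N₂)
    (Mx My : (Fin d → ℝ) → ℝ)
    (hMx : Mx = fun μ => (Xbar - μ) ⬝ᵥ (S₁⁻¹ *ᵥ (Xbar - μ)))
    (hMy : My = fun μ => (Ybar - μ) ⬝ᵥ (S₂⁻¹ *ᵥ (Ybar - μ))) :
    ∀ μ : Fin d → ℝ,
      N₁ * Real.log (1 + Mx μ) + N₂ * Real.log (1 + My μ) ≥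
        N₁ * ((Xbar - μ) ⬝ᵥ ((S₁ + vecMulVec (Xbar - μ) (Xbar - μ))⁻¹ *ᵥ (Xbar - μ)))
          + N₂ * ((Ybar - μ) ⬝ᵥ ((S₂ + vecMulVec (Ybar - μ) (Ybar - μ))⁻¹ *ᵥ (Ybar - μ))) := by
  intro μ
  subst hMx hMy
  gcongr
  · exact hS₁.dotProduct_inv_add_vecMulVec_self_mulVec_le_log _
  · exact hS₂.dotProduct_inv_add_vecMulVec_self_mulVec_le_log _

theorem stmt11 (d : ℕ) (hd : 1 ≤ d)
    (S₁ S₂ : Matrix (Fin d) (Fin d) ℝ) (hS₁ : S₁.PosDef) (hS₂ : S₂.PosDef)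
    (Xbar Ybar : Fin d → ℝ) (N₁ N₂ : ℝ) (hN₁ : 0 < N₁) (hN₂ : 0 < N₂)
    (Mx My : (Fin d → ℝ) → ℝ)
    (hMx : Mx = fun μ => (Xbar - μ) ⬝ᵥ (S₁⁻¹ *ᵥ (Xbar - μ)))
    (hMy : My = fun μ => (Ybar - μ) ⬝ᵥ (S₂⁻¹ *ᵥ (Ybar - μ))) :
    ∀ μ : Fin d → ℝ,
      N₁ * Real.log (1 + Mx μ) + N₂ * Real.log (1 + My μ) ≥
        N₁ * ((Xbar - μ) ⬝ᵥ ((S₁ + vecMulVec (Xbar - μ) (Xbar - μ))⁻¹ *ᵥ (Xbar - μ)))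
          + N₂ * ((Ybar - μ) ⬝ᵥ ((S₂ + vecMulVec (Ybar - μ) (Ybar - μ))⁻¹ *ᵥ (Ybar - μ))) :=
  stmt11_general d S₁ S₂ hS₁ hS₂ Xbar Ybar N₁ N₂ hN₁ hN₂ Mx My hMx hMy
end

section
/- Let μ̂_0 = (N_1 S_1⁻¹ + N_2 S_2⁻¹)⁻¹ (N_1 S_1⁻¹ X̄ + N_2 S_2⁻¹ Ȳ). Then N_1 log(1 + M_X(μ̂_0)) + N_2 log(1 + M_Y(μ̂_0)) ≤ (X̄ − Ȳ)ᵀ (S_1/N_1 + S_2/N_2)⁻¹ (X̄ − Ȳ); that is, the log-likelihood-ratio value LR_0 evaluated at the natural initial point μ̂_0 satisfies W ≥ LR_0, where W is the Wald statistic. -/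
/-!
With `A = N₁ • S₁⁻¹` and `B = N₂ • S₂⁻¹`, the point `μ̂₀` is the stationary point of the quadratic
`N₁ M_X + N₂ M_Y`, i.e. `A (X̄ - μ̂₀) = -B (Ȳ - μ̂₀)`. This collapses the value of the quadratic at
`μ̂₀` to `(X̄ - Ȳ)ᵀ B (A + B)⁻¹ A (X̄ - Ȳ)`, and `B (A + B)⁻¹ A = (A⁻¹ + B⁻¹)⁻¹` is exactly the
matrix of the Wald statistic. So `N₁ M_X(μ̂₀) + N₂ M_Y(μ̂₀) = W`, and the inequality is
`log (1 + t) ≤ t` applied to each term.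
-/

open Matrix Real

namespace Matrix

variable {n R : Type*} [Fintype n] [DecidableEq n] [CommRing R]

noncomputable def weightedMean (A B : Matrix n n R) (x y : n → R) : n → R :=
  (A + B)⁻¹ *ᵥ (A *ᵥ x + B *ᵥ y)

variable {A B : Matrix n n R} {x y : n → R}

theorem mulVec_sub_weightedMean_add (h : IsUnit (A + B).det) :
    A *ᵥ (x - weightedMean A B x y) + B *ᵥ (y - weightedMean A B x y) = 0 := by
  have hμ : (A + B) *ᵥ weightedMean A B x y = A *ᵥ x + B *ᵥ y := by
    rw [weightedMean, mulVec_mulVec, mul_nonsing_inv _ h, one_mulVec]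
  rw [mulVec_sub, mulVec_sub, sub_add_sub_comm, ← add_mulVec, hμ, sub_self]

theorem sub_weightedMean_right (h : IsUnit (A + B).det) :
    y - weightedMean A B x y = (A + B)⁻¹ *ᵥ (A *ᵥ (y - x)) := by
  have hy : y = (A + B)⁻¹ *ᵥ ((A + B) *ᵥ y) := by
    rw [mulVec_mulVec, nonsing_inv_mul _ h, one_mulVec]
  rw [weightedMean]
  nth_rewrite 1 [hy]
  rw [add_mulVec, mulVec_sub A y x, ← mulVec_sub, add_sub_add_right_eq_sub]

theorem quadratic_sum_weightedMean (h : IsUnit (A + B).det) :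
    (x - weightedMean A B x y) ⬝ᵥ (A *ᵥ (x - weightedMean A B x y)) +
      (y - weightedMean A B x y) ⬝ᵥ (B *ᵥ (y - weightedMean A B x y)) =
      (x - y) ⬝ᵥ ((B * (A + B)⁻¹ * A) *ᵥ (x - y)) := by
  set μ := weightedMean A B x y
  have hA : A *ᵥ (x - μ) = -(B *ᵥ (y - μ)) :=
    eq_neg_of_add_eq_zero_left (mulVec_sub_weightedMean_add h)
  calc (x - μ) ⬝ᵥ (A *ᵥ (x - μ)) + (y - μ) ⬝ᵥ (B *ᵥ (y - μ))
      = (y - μ - (x - μ)) ⬝ᵥ (B *ᵥ (y - μ)) := by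
        rw [hA, dotProduct_neg, sub_dotProduct (y - μ)]; abel
    _ = (y - x) ⬝ᵥ ((B * (A + B)⁻¹ * A) *ᵥ (y - x)) := by
      rw [sub_sub_sub_cancel_right, sub_weightedMean_right h, mulVec_mulVec, mulVec_mulVec]
    _ = (x - y) ⬝ᵥ ((B * (A + B)⁻¹ * A) *ᵥ (x - y)) := by
      rw [← neg_sub x y, mulVec_neg, neg_dotProduct_neg]

theorem inv_inv_add_inv (hA : IsUnit A.det) (hB : IsUnit B.det) :
    (A⁻¹ + B⁻¹)⁻¹ = B * (A + B)⁻¹ * A := by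
  have h : A⁻¹ + B⁻¹ = A⁻¹ * (A + B) * B⁻¹ := by
    rw [mul_add, add_mul, nonsing_inv_mul _ hA, one_mul, mul_assoc, mul_nonsing_inv _ hB, mul_one,
      add_comm]
  rw [h, mul_inv_rev, mul_inv_rev, nonsing_inv_nonsing_inv _ hA, nonsing_inv_nonsing_inv _ hB,
    mul_assoc]

theorem inv_smul_nonsing_inv {K : Type*} [Field K] {S : Matrix n n K} (hS : IsUnit S.det) {c : K}
    (hc : c ≠ 0) : (c • S⁻¹)⁻¹ = c⁻¹ • S :=
  inv_eq_left_inv (by rw [smul_mul_smul_comm, inv_mul_cancel₀ hc, one_smul, mul_nonsing_inv _ hS])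

end Matrix

theorem Real.log_one_add_le_self {t : ℝ} (ht : -1 < t) : log (1 + t) ≤ t := by
  linarith [log_le_sub_one_of_pos (by linarith : (0 : ℝ) < 1 + t)]

theorem stmt12_general (d : ℕ)
    (S₁ S₂ : Matrix (Fin d) (Fin d) ℝ) (hS₁ : S₁.PosDef) (hS₂ : S₂.PosDef)
    (Xbar Ybar : Fin d → ℝ) (N₁ N₂ : ℝ) (hN₁ : 0 < N₁) (hN₂ : 0 < N₂)
    (Mx My : (Fin d → ℝ) → ℝ)
    (hMx : Mx = fun μ => (Xbar - μ) ⬝ᵥ (S₁⁻¹ *ᵥ (Xbar - μ)))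
    (hMy : My = fun μ => (Ybar - μ) ⬝ᵥ (S₂⁻¹ *ᵥ (Ybar - μ)))
    (W : ℝ)
    (hW : W = (Xbar - Ybar) ⬝ᵥ ((N₁⁻¹ • S₁ + N₂⁻¹ • S₂)⁻¹ *ᵥ (Xbar - Ybar)))
    (μhat₀ : Fin d → ℝ)
    (hμhat₀ : μhat₀ = (N₁ • S₁⁻¹ + N₂ • S₂⁻¹)⁻¹ *ᵥ (N₁ • (S₁⁻¹ *ᵥ Xbar) + N₂ • (S₂⁻¹ *ᵥ Ybar))) :
    N₁ * Real.log (1 + Mx μhat₀) + N₂ * Real.log (1 + My μhat₀) ≤ W := by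
  have hA : (N₁ • S₁⁻¹).PosDef := hS₁.inv.smul hN₁
  have hB : (N₂ • S₂⁻¹).PosDef := hS₂.inv.smul hN₂
  have hμ : μhat₀ = weightedMean (N₁ • S₁⁻¹) (N₂ • S₂⁻¹) Xbar Ybar := by
    rw [hμhat₀, weightedMean, smul_mulVec, smul_mulVec]
  have hW_eq : N₁ * Mx μhat₀ + N₂ * My μhat₀ = W := by
    rw [hW, ← inv_smul_nonsing_inv hS₁.det_pos.ne'.isUnit hN₁.ne',
      ← inv_smul_nonsing_inv hS₂.det_pos.ne'.isUnit hN₂.ne',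
      inv_inv_add_inv hA.det_pos.ne'.isUnit hB.det_pos.ne'.isUnit,
      ← quadratic_sum_weightedMean (hA.add hB).det_pos.ne'.isUnit, hMx, hMy, hμ]
    simp only [smul_mulVec, dotProduct_smul, smul_eq_mul]
  have hMx_nonneg : 0 ≤ Mx μhat₀ := by
    simpa [hMx] using hS₁.inv.posSemidef.dotProduct_mulVec_nonneg (Xbar - μhat₀)
  have hMy_nonneg : 0 ≤ My μhat₀ := by
    simpa [hMy] using hS₂.inv.posSemidef.dotProduct_mulVec_nonneg (Ybar - μhat₀)
  rw [← hW_eq]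
  gcongr <;> exact log_one_add_le_self (by linarith)

theorem stmt12 (d : ℕ) (hd : 1 ≤ d)
    (S₁ S₂ : Matrix (Fin d) (Fin d) ℝ) (hS₁ : S₁.PosDef) (hS₂ : S₂.PosDef)
    (Xbar Ybar : Fin d → ℝ) (N₁ N₂ : ℝ) (hN₁ : 0 < N₁) (hN₂ : 0 < N₂)
    (Mx My : (Fin d → ℝ) → ℝ)
    (hMx : Mx = fun μ => (Xbar - μ) ⬝ᵥ (S₁⁻¹ *ᵥ (Xbar - μ)))
    (hMy : My = fun μ => (Ybar - μ) ⬝ᵥ (S₂⁻¹ *ᵥ (Ybar - μ)))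
    (W : ℝ)
    (hW : W = (Xbar - Ybar) ⬝ᵥ ((N₁⁻¹ • S₁ + N₂⁻¹ • S₂)⁻¹ *ᵥ (Xbar - Ybar)))
    (μhat₀ : Fin d → ℝ)
    (hμhat₀ : μhat₀ = (N₁ • S₁⁻¹ + N₂ • S₂⁻¹)⁻¹ *ᵥ (N₁ • (S₁⁻¹ *ᵥ Xbar) + N₂ • (S₂⁻¹ *ᵥ Ybar))) :
    N₁ * Real.log (1 + Mx μhat₀) + N₂ * Real.log (1 + My μhat₀) ≤ W :=
  stmt12_general d S₁ S₂ hS₁ hS₂ Xbar Ybar N₁ N₂ hN₁ hN₂ Mx My hMx hMy W hW μhat₀ hμhat₀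
end

section
/- Define h_X : [0, ∞) → ℝ by h_X(v) = inf { M_Y(μ) : μ ∈ ℝ^d, M_X(μ) ≤ v }, and for λ ≥ 0 let μ̂(λ) = (S_2⁻¹ + λ S_1⁻¹)⁻¹ (S_2⁻¹ Ȳ + λ S_1⁻¹ X̄). If λ* ≥ 0 and v_1 = M_X(μ̂(λ*)), then for every v ≥ 0, h_X(v_1) − λ* (v − v_1) ≤ h_X(v); that is, −λ* is a subgradient of h_X at v_1. -/
/-!
The point `μ̂(λ*)` solves the linear equation `(S₂⁻¹ + λ* S₁⁻¹) μ = S₂⁻¹ Ȳ + λ* S₁⁻¹ X̄`, i.e. it is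
a stationary point, hence a global minimiser, of the convex Lagrangian `M_Y + λ* M_X`. So every `μ`
with `M_X(μ) ≤ v` satisfies
`M_Y(μ) ≥ M_Y(μ̂) - λ* (M_X(μ) - v₁) ≥ h_X(v₁) - λ* (v - v₁)`, and taking the infimum gives the claim.
-/

open Matrix Real

section QuadraticForm

variable {n : Type*} [Fintype n] {P Q : Matrix n n ℝ}

lemma Matrix.IsSymm.dotProduct_mulVec_sub_sub (hP : P.IsSymm) (a x y : n → ℝ) :
    (a - x) ⬝ᵥ (P *ᵥ (a - x)) = (a - y) ⬝ᵥ (P *ᵥ (a - y)) + (x - y) ⬝ᵥ (P *ᵥ (x - y))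
      + 2 * ((x - y) ⬝ᵥ (P *ᵥ (y - a))) := by
  have hsymm : ∀ u w : n → ℝ, u ⬝ᵥ (P *ᵥ w) = w ⬝ᵥ (P *ᵥ u) := fun u w => by
    rw [dotProduct_mulVec, ← mulVec_transpose, hP.eq, dotProduct_comm]
  have hxy := hsymm x y
  have hax := hsymm a x
  have hay := hsymm a y
  simp only [mulVec_sub, dotProduct_sub, sub_dotProduct]
  linarith

lemma dotProduct_mulVec_add_dotProduct_mulVec_le_of_mulVec_eq (hP : P.IsSymm) (hQ : Q.IsSymm)
    (hPQ : (P + Q).PosSemidef) {a b y : n → ℝ} (hy : (P + Q) *ᵥ y = P *ᵥ a + Q *ᵥ b)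
    (x : n → ℝ) :
    (a - y) ⬝ᵥ (P *ᵥ (a - y)) + (b - y) ⬝ᵥ (Q *ᵥ (b - y))
      ≤ (a - x) ⬝ᵥ (P *ᵥ (a - x)) + (b - x) ⬝ᵥ (Q *ᵥ (b - x)) := by
  have hgrad : P *ᵥ (y - a) + Q *ᵥ (y - b) = 0 := by
    rw [mulVec_sub, mulVec_sub, sub_add_sub_comm, ← add_mulVec, hy, sub_self]
  have hcross : (x - y) ⬝ᵥ (P *ᵥ (y - a)) + (x - y) ⬝ᵥ (Q *ᵥ (y - b)) = 0 := by
    rw [← dotProduct_add, hgrad, dotProduct_zero]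
  have hnonneg : 0 ≤ (x - y) ⬝ᵥ ((P + Q) *ᵥ (x - y)) := by
    simpa using hPQ.dotProduct_mulVec_nonneg (x - y)
  rw [hP.dotProduct_mulVec_sub_sub a x y, hQ.dotProduct_mulVec_sub_sub b x y]
  rw [add_mulVec, dotProduct_add] at hnonneg
  linarith

end QuadraticForm

section ConstrainedInf

variable {α : Type*}

noncomputable def constrainedInf (f g : α → ℝ) (v : ℝ) : ℝ :=
  sInf {t : ℝ | ∃ x, f x ≤ v ∧ t = g x}

theorem constrainedInf_sub_mul_le {f g : α → ℝ} {c v : ℝ} {x₀ : α} (hc : 0 ≤ c)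
    (hg : BddBelow (Set.range g)) (hmin : ∀ x, g x₀ + c * f x₀ ≤ g x + c * f x)
    (hv : ∃ x, f x ≤ v) :
    constrainedInf f g (f x₀) - c * (v - f x₀) ≤ constrainedInf f g v := by
  obtain ⟨m, hm⟩ := hg
  have hbdd : ∀ w, BddBelow {t : ℝ | ∃ x, f x ≤ w ∧ t = g x} := fun w =>
    ⟨m, by rintro _ ⟨x, -, rfl⟩; exact hm ⟨x, rfl⟩⟩
  have hx₀ : constrainedInf f g (f x₀) ≤ g x₀ := csInf_le (hbdd _) ⟨x₀, le_rfl, rfl⟩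
  suffices g x₀ - c * (v - f x₀) ≤ constrainedInf f g v by linarith
  obtain ⟨x₁, hx₁⟩ := hv
  refine le_csInf ⟨g x₁, x₁, hx₁, rfl⟩ ?_
  rintro _ ⟨x, hx, rfl⟩
  have hcx : c * f x ≤ c * v := mul_le_mul_of_nonneg_left hx hc
  linarith [hmin x]

end ConstrainedInf

theorem stmt14_general (d : ℕ)
    (S₁ S₂ : Matrix (Fin d) (Fin d) ℝ) (hS₁ : S₁.PosDef) (hS₂ : S₂.PosDef)
    (Xbar Ybar : Fin d → ℝ)
    (Mx My : (Fin d → ℝ) → ℝ)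
    (hMx : Mx = fun μ => (Xbar - μ) ⬝ᵥ (S₁⁻¹ *ᵥ (Xbar - μ)))
    (hMy : My = fun μ => (Ybar - μ) ⬝ᵥ (S₂⁻¹ *ᵥ (Ybar - μ)))
    (hX : ℝ → ℝ)
    (hhX : hX = fun v => sInf {t : ℝ | ∃ μ : Fin d → ℝ, Mx μ ≤ v ∧ t = My μ})
    (lamstar : ℝ) (hlam : 0 ≤ lamstar) (μhat : Fin d → ℝ)
    (hμhat : μhat = (S₂⁻¹ + lamstar • S₁⁻¹)⁻¹ *ᵥ (S₂⁻¹ *ᵥ Ybar + lamstar • (S₁⁻¹ *ᵥ Xbar)))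
    (v₁ : ℝ) (hv₁ : v₁ = Mx μhat) :
    ∀ v : ℝ, 0 ≤ v → hX v₁ - lamstar * (v - v₁) ≤ hX v := by
  intro v hv
  subst hMx hMy hhX hv₁
  have hS₁sym : S₁⁻¹.IsSymm := isHermitian_iff_isSymm.mp hS₁.inv.isHermitian
  have hS₂sym : S₂⁻¹.IsSymm := isHermitian_iff_isSymm.mp hS₂.inv.isHermitian
  have hA : (S₂⁻¹ + lamstar • S₁⁻¹).PosDef :=
    hS₂.inv.add_posSemidef (hS₁.inv.posSemidef.smul hlam)
  have hstat : (S₂⁻¹ + lamstar • S₁⁻¹) *ᵥ μhat = S₂⁻¹ *ᵥ Ybar + (lamstar • S₁⁻¹) *ᵥ Xbar := by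
    rw [hμhat, mulVec_mulVec, mul_nonsing_inv _ hA.det_pos.ne'.isUnit, one_mulVec, smul_mulVec]
  refine constrainedInf_sub_mul_le hlam ⟨0, ?_⟩ (fun μ => ?_) ⟨Xbar, by simpa using hv⟩
  · rintro _ ⟨μ, rfl⟩
    simpa using hS₂.inv.posSemidef.dotProduct_mulVec_nonneg (Ybar - μ)
  · simpa only [smul_mulVec, dotProduct_smul, smul_eq_mul] using
      dotProduct_mulVec_add_dotProduct_mulVec_le_of_mulVec_eq hS₂sym (hS₁sym.smul lamstar)
        hA.posSemidef hstat μ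

theorem stmt14 (d : ℕ) (hd : 1 ≤ d)
    (S₁ S₂ : Matrix (Fin d) (Fin d) ℝ) (hS₁ : S₁.PosDef) (hS₂ : S₂.PosDef)
    (Xbar Ybar : Fin d → ℝ)
    (Mx My : (Fin d → ℝ) → ℝ)
    (hMx : Mx = fun μ => (Xbar - μ) ⬝ᵥ (S₁⁻¹ *ᵥ (Xbar - μ)))
    (hMy : My = fun μ => (Ybar - μ) ⬝ᵥ (S₂⁻¹ *ᵥ (Ybar - μ)))
    (hX : ℝ → ℝ)
    (hhX : hX = fun v => sInf {t : ℝ | ∃ μ : Fin d → ℝ, Mx μ ≤ v ∧ t = My μ})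
    (lamstar : ℝ) (hlam : 0 ≤ lamstar) (μhat : Fin d → ℝ)
    (hμhat : μhat = (S₂⁻¹ + lamstar • S₁⁻¹)⁻¹ *ᵥ (S₂⁻¹ *ᵥ Ybar + lamstar • (S₁⁻¹ *ᵥ Xbar)))
    (v₁ : ℝ) (hv₁ : v₁ = Mx μhat) :
    ∀ v : ℝ, 0 ≤ v → hX v₁ - lamstar * (v - v₁) ≤ hX v :=
  stmt14_general d S₁ S₂ hS₁ hS₂ Xbar Ybar Mx My hMx hMy hX hhX lamstar hlam μhat hμhat v₁ hv₁
end
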